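/- arXiv:2005.05484 — 3 statements merged into one kernel-verified Lean document; each statement's English description precedes it below -/
import Mathlib

section
/- For every nonzero integer m and every integer n, the finite sets of rational numbers {12^m, 2^m, 24^{−m}} and {4^n, 3^n, 12^{−n}} are distinct. Consequently, for A = diag(12, 2, 1/24) and B = diag(4, 3, 1/12) in SL₃(ℚ), no nonzero powers A^m and B^n have the same multiset of eigenvalues. -/
/-!
The 2-adic valuation separates the two sets: `3 ^ n` has valuation `0`, whereas
`12 ^ m`, `2 ^ m` and `24 ^ (-m)` have valuations `2m`, `m` and `-3m`, all nonzero for `m ≠ 0`.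
The eigenvalue statement reduces to this, since the powers of a diagonal matrix are diagonal.
-/

open Matrix Polynomial

theorem Matrix.diagonal_zpow {n K : Type*} [Fintype n] [DecidableEq n] [Field K] {d : n → K}
    (hd : ∀ i, d i ≠ 0) (m : ℤ) : diagonal d ^ m = diagonal (d ^ m) := by
  obtain ⟨k, rfl | rfl⟩ := m.eq_nat_or_neg
  · simp [diagonal_pow]
  · have hdk : IsUnit (d ^ k) := (Pi.isUnit_iff.2 fun i => (hd i).isUnit).pow k
    rw [zpow_neg_natCast, diagonal_pow, inv_diagonal, Ring.inverse_of_isUnit hdk]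
    ext i j
    simp

theorem Matrix.roots_charpoly_diagonal {n R : Type*} [Fintype n] [DecidableEq n] [CommRing R]
    [IsDomain R] (d : n → R) : (diagonal d).charpoly.roots = Finset.univ.val.map d := by
  rw [charpoly_diagonal, Finset.prod_eq_multiset_prod]
  simpa only [Multiset.map_map, Function.comp_def] using
    roots_multiset_prod_X_sub_C (Finset.univ.val.map d)

theorem padicValRat_natCast_eq_zero_iff {p k : ℕ} [hp : Fact p.Prime] :
    padicValRat p k = 0 ↔ k = 0 ∨ ¬p ∣ k := by
  rw [padicValRat.of_nat, Nat.cast_eq_zero, padicValNat.eq_zero_iff, or_iff_right hp.out.ne_one]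

theorem zpow_ne_zpow_of_padicValRat {p : ℕ} [Fact p.Prime] {q r : ℚ}
    (hq : padicValRat p q ≠ 0) (hr : padicValRat p r = 0) {m : ℤ} (hm : m ≠ 0) (n : ℤ) :
    q ^ m ≠ r ^ n := fun h => by
  simpa [hq, hm, hr] using congrArg (padicValRat p) h

theorem three_zpow_notMem {m : ℤ} (hm : m ≠ 0) (n : ℤ) :
    (3 : ℚ) ^ n ∉ ({(12 : ℚ) ^ m, 2 ^ m, 24 ^ (-m)} : Finset ℚ) := by
  have hval : ∀ k : ℕ, 2 ∣ k → k ≠ 0 → padicValRat 2 (k : ℚ) ≠ 0 := fun k h2 hk h => by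
    rw [padicValRat_natCast_eq_zero_iff] at h
    omega
  have h3 : padicValRat 2 (3 : ℚ) = 0 := mod_cast padicValRat_natCast_eq_zero_iff.2 (by omega)
  have key {k : ℕ} (h2 : 2 ∣ k) (hk : k ≠ 0) {l : ℤ} (hl : l ≠ 0) : ((k : ℚ) ^ l) ≠ 3 ^ n :=
    zpow_ne_zpow_of_padicValRat (hval k h2 hk) h3 hl n
  simp only [Finset.mem_insert, Finset.mem_singleton, not_or]
  exact ⟨(key (k := 12) (by norm_num) (by norm_num) hm).symm,
    (key (k := 2) (by norm_num) (by norm_num) hm).symm,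
    (key (k := 24) (by norm_num) (by norm_num) (neg_ne_zero.2 hm)).symm⟩

theorem stmt_2 :
    (∀ m n : ℤ, m ≠ 0 →
      ({(12 : ℚ) ^ m, 2 ^ m, 24 ^ (-m)} : Finset ℚ) ≠
        ({(4 : ℚ) ^ n, 3 ^ n, 12 ^ (-n)} : Finset ℚ)) ∧
    (∀ A B : GL (Fin 3) ℚ,
      (A : Matrix (Fin 3) (Fin 3) ℚ) = Matrix.diagonal ![12, 2, 1/24] →
      (B : Matrix (Fin 3) (Fin 3) ℚ) = Matrix.diagonal ![4, 3, 1/12] →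
      ∀ m n : ℤ, m ≠ 0 → n ≠ 0 →
        ((A ^ m : GL (Fin 3) ℚ) : Matrix (Fin 3) (Fin 3) ℚ).charpoly.roots ≠
          ((B ^ n : GL (Fin 3) ℚ) : Matrix (Fin 3) (Fin 3) ℚ).charpoly.roots) := by
  have sets_ne (m n : ℤ) (hm : m ≠ 0) :
      ({(12 : ℚ) ^ m, 2 ^ m, 24 ^ (-m)} : Finset ℚ) ≠ {(4 : ℚ) ^ n, 3 ^ n, 12 ^ (-n)} :=
    fun h => three_zpow_notMem hm n (h ▸ by simp)
  refine ⟨sets_ne, fun A B hA hB m n hm _ hroots => sets_ne m n hm ?_⟩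
  rw [coe_units_zpow, coe_units_zpow, hA, hB,
    diagonal_zpow (fun i => by fin_cases i <;> norm_num),
    diagonal_zpow (fun i => by fin_cases i <;> norm_num),
    roots_charpoly_diagonal, roots_charpoly_diagonal] at hroots
  simpa [Fin.univ_val_map] using congrArg Multiset.toFinset hroots
end

section
/- Let K be a field equipped with a valuation v (with values in a linearly ordered abelian group, written additively, together with ∞), and for a nonzero polynomial f = Σ aᵢ Xⁱ over K define w(f) = minᵢ v(aᵢ). Then for all nonzero polynomials f, g ∈ K[X], one has w(fg) = w(f) + w(g). -/
/-!
Let `a = w(f)`, `b = w(g)` and let `i`, `j` be the smallest indices with `v(fᵢ) = a`,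
`v(gⱼ) = b`. Every term of the coefficient of `X^(i+j)` in `fg` other than `fᵢ gⱼ` has
a factor `f_p` with `p < i` or `g_q` with `q < j`, so its valuation is `< ab`; by the
ultrametric inequality that coefficient has valuation exactly `ab`, while no coefficient
of `fg` can exceed `ab`.
-/

open Finset

namespace Polynomial

variable {R Γ₀ : Type*} [CommRing R] [LinearOrderedCommGroupWithZero Γ₀] (v : Valuation R Γ₀)

def gaussVal (p : R[X]) : Γ₀ :=
  p.support.sup fun i => v (p.coeff i)

variable {v}

theorem valuation_coeff_le_gaussVal (p : R[X]) (n : ℕ) : v (p.coeff n) ≤ p.gaussVal v := by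
  by_cases hn : n ∈ p.support
  · exact le_sup (f := fun i => v (p.coeff i)) hn
  · rw [notMem_support_iff.mp hn, map_zero]
    exact zero_le

theorem exists_valuation_coeff_eq_gaussVal (p : R[X]) : ∃ n, v (p.coeff n) = p.gaussVal v := by
  rcases p.support.eq_empty_or_nonempty with hp | hp
  · exact ⟨0, by simp [gaussVal, support_eq_empty.mp hp, bot_eq_zero]⟩
  · obtain ⟨n, -, hn⟩ := exists_mem_eq_sup _ hp fun i => v (p.coeff i)
    exact ⟨n, hn.symm⟩

theorem exists_first_valuation_coeff_eq_gaussVal (p : R[X]) :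
    ∃ i, v (p.coeff i) = p.gaussVal v ∧ ∀ k < i, v (p.coeff k) < p.gaussVal v := by
  classical
  have hex := exists_valuation_coeff_eq_gaussVal (v := v) p
  exact ⟨Nat.find hex, Nat.find_spec hex, fun k hk =>
    (valuation_coeff_le_gaussVal p k).lt_of_ne (Nat.find_min hex hk)⟩

theorem valuation_coeff_mul_le (f g : R[X]) (n : ℕ) :
    v ((f * g).coeff n) ≤ f.gaussVal v * g.gaussVal v := by
  rw [coeff_mul]
  refine v.map_sum_le fun x _ => ?_
  rw [v.map_mul]
  exact mul_le_mul' (valuation_coeff_le_gaussVal f x.1) (valuation_coeff_le_gaussVal g x.2)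

theorem valuation_coeff_mul_add_eq {f g : R[X]} {i j : ℕ}
    (hi : v (f.coeff i) = f.gaussVal v) (hi' : ∀ k < i, v (f.coeff k) < f.gaussVal v)
    (hj : v (g.coeff j) = g.gaussVal v) (hj' : ∀ k < j, v (g.coeff k) < g.gaussVal v)
    (hf : 0 < f.gaussVal v) (hg : 0 < g.gaussVal v) :
    v ((f * g).coeff (i + j)) = f.gaussVal v * g.gaussVal v := by
  rw [coeff_mul, v.map_sum_eq_of_lt (j := (i, j)) (by simp)]
  · rw [v.map_mul, hi, hj]
  rintro ⟨p, q⟩ hpq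
  simp only [mem_sdiff, HasAntidiagonal.mem_antidiagonal, mem_singleton, Prod.mk.injEq] at hpq
  obtain ⟨hsum, hne⟩ := hpq
  simp only [v.map_mul, hi, hj]
  rcases lt_or_ge p i with hp | hp
  · exact mul_lt_mul_of_lt_of_le_of_nonneg_of_pos (hi' p hp)
      (valuation_coeff_le_gaussVal g q) zero_le hg
  · have hq : q < j := by omega
    exact mul_lt_mul_of_le_of_lt_of_nonneg_of_pos (valuation_coeff_le_gaussVal f p)
      (hj' q hq) zero_le hf

theorem gaussVal_mul (f g : R[X]) : (f * g).gaussVal v = f.gaussVal v * g.gaussVal v := by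
  refine le_antisymm (Finset.sup_le fun n _ => valuation_coeff_mul_le f g n) ?_
  rcases (zero_le : 0 ≤ f.gaussVal v).eq_or_lt with hf | hf
  · rw [← hf, zero_mul]
    exact zero_le
  rcases (zero_le : 0 ≤ g.gaussVal v).eq_or_lt with hg | hg
  · rw [← hg, mul_zero]
    exact zero_le
  obtain ⟨i, hi, hi'⟩ := exists_first_valuation_coeff_eq_gaussVal (v := v) f
  obtain ⟨j, hj, hj'⟩ := exists_first_valuation_coeff_eq_gaussVal (v := v) g
  rw [← valuation_coeff_mul_add_eq hi hi' hj hj' hf hg]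
  exact valuation_coeff_le_gaussVal (f * g) (i + j)

end Polynomial

theorem stmt_3 {K Γ₀ : Type*} [Field K] [LinearOrderedCommGroupWithZero Γ₀]
    (v : Valuation K Γ₀) (f g : Polynomial K) (hf : f ≠ 0) (hg : g ≠ 0) :
    (f * g).support.sup' (Polynomial.support_nonempty.mpr (mul_ne_zero hf hg))
        (fun i => v ((f * g).coeff i)) =
      f.support.sup' (Polynomial.support_nonempty.mpr hf) (fun i => v (f.coeff i)) *
        g.support.sup' (Polynomial.support_nonempty.mpr hg) (fun i => v (g.coeff i)) := by
  simp only [Finset.sup'_eq_sup]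
  exact Polynomial.gaussVal_mul f g
end

section
/- Let n ≥ 1 and let A ∈ GL_n(ℤ) be a matrix of finite order such that every entry of A − I is divisible by 3. Then A = I. Consequently, the reduction map GL_n(ℤ) → GL_n(ℤ/3ℤ) is injective on every finite subgroup of GL_n(ℤ). -/
/-!
Let `X ≡ 1 (mod p)` with `p` odd and `X ^ q = 1` for a prime `q`. If `X = 1 + p ^ (k + 1) B`, then
`0 = q p ^ (k + 1) B + (q choose 2) p ^ (2k + 2) B ^ 2 + p ^ (3k + 3) (…)`. Dividing by
`p ^ (k + 1)` and reducing modulo `p` (after one more division by `p` when `q = p`, using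
`p ∣ (p choose 2)`) gives `p ∣ B`. Hence `X - 1` is divisible by every power of `p`, so `X = 1`.
An element of finite order `≠ 1` has a power of prime order, so the congruence kernel is
torsion-free, and a finite subgroup meets it trivially.
-/

theorem exists_one_add_pow_eq_add_mul_pow_three {R : Type*} [Ring R] (a : R) (n : ℕ) :
    ∃ c : R, (1 + a) ^ n = 1 + n • a + n.choose 2 • a ^ 2 + a ^ 3 * c := by
  induction n with
  | zero => exact ⟨0, by simp⟩
  | succ n ih =>
    obtain ⟨c, hc⟩ := ih
    refine ⟨n.choose 2 • 1 + c + c * a, ?_⟩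
    rw [pow_succ, hc, Nat.choose_succ_succ, Nat.choose_one_right]
    simp only [add_mul, mul_add, add_smul, one_smul, smul_mul_assoc, mul_smul_comm, mul_one,
      one_mul]
    noncomm_ring

theorem IsOfFinOrder.eq_one_of_forall_pow_prime {G : Type*} [Monoid G] {g : G}
    (hg : IsOfFinOrder g) (h : ∀ m q : ℕ, q.Prime → (g ^ m) ^ q = 1 → g ^ m = 1) : g = 1 := by
  by_contra hne
  obtain ⟨q, hq, hqd⟩ := Nat.exists_prime_and_dvd (mt orderOf_eq_one_iff.mp hne)
  have hpow : (g ^ (orderOf g / q)) ^ q = 1 := by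
    rw [← pow_mul, Nat.div_mul_cancel hqd, pow_orderOf_eq_one]
  have hord := orderOf_pow_orderOf_div hg.orderOf_pos.ne' hqd
  rw [h _ q hq hpow, orderOf_one] at hord
  exact hq.one_lt.ne hord

theorem MonoidHom.injOn_of_isOfFinOrder_ker {G H : Type*} [Group G] [Group H] (f : G →* H)
    (hf : ∀ g, IsOfFinOrder g → f g = 1 → g = 1) (K : Subgroup G) [Finite K] :
    Set.InjOn f K := by
  intro x hx y hy hxy
  have hK : x * y⁻¹ ∈ K := K.mul_mem hx (K.inv_mem hy)
  have hfin : IsOfFinOrder (x * y⁻¹) := K.subtype.isOfFinOrder (isOfFinOrder_of_finite ⟨_, hK⟩)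
  refine mul_inv_eq_one.mp (hf _ hfin ?_)
  rw [map_mul, map_inv, hxy, mul_inv_cancel]

namespace Matrix

variable {ι : Type*}

theorem exists_eq_smul_of_forall_dvd {a : ℤ} {M : Matrix ι ι ℤ} (h : ∀ i j, a ∣ M i j) :
    ∃ B : Matrix ι ι ℤ, M = a • B :=
  ⟨M.map (· / a), ext fun i j => (Int.mul_ediv_cancel' (h i j)).symm⟩

theorem eq_zero_of_forall_exists_eq_pow_succ_smul {a : ℤ} (ha : a.natAbs ≠ 1)
    {M : Matrix ι ι ℤ} (h : ∀ k : ℕ, ∃ B : Matrix ι ι ℤ, M = a ^ (k + 1) • B) : M = 0 := by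
  ext i j
  by_contra hne
  obtain ⟨k, hk⟩ := Int.finiteMultiplicity_iff.mpr ⟨ha, hne⟩
  obtain ⟨B, hB⟩ := h k
  exact hk ⟨B i j, by rw [hB]; rfl⟩

variable [Fintype ι] [DecidableEq ι]

theorem forall_dvd_of_one_add_pow_smul_pow_eq_one {p q : ℕ} (hp : p.Prime) (hp2 : p ≠ 2)
    (hq : q.Prime) (k : ℕ) (B : Matrix ι ι ℤ) (h : (1 + (p : ℤ) ^ (k + 1) • B) ^ q = 1) :
    ∀ i j, (p : ℤ) ∣ B i j := by
  obtain ⟨c, hc⟩ := exists_one_add_pow_eq_add_mul_pow_three ((p : ℤ) ^ (k + 1) • B) q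
  set E := (q.choose 2 : ℤ) • B ^ 2 + (p : ℤ) ^ (k + 1) • (B ^ 3 * c)
  have hpk : (p : ℤ) ^ (k + 1) ≠ 0 := pow_ne_zero _ (by exact_mod_cast hp.ne_zero)
  have hqB : (q : ℤ) • B = (p : ℤ) • -((p : ℤ) ^ k • E) := by
    have : (q : ℤ) • B + (p : ℤ) ^ (k + 1) • E = 0 := by
      refine (smul_eq_zero.mp ?_).resolve_left hpk
      rw [h, smul_pow, smul_pow, smul_mul_assoc] at hc
      linear_combination (norm := module) -hc
    linear_combination (norm := module) this
  intro i j
  rcases eq_or_ne q p with rfl | hqp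
  · obtain ⟨m, hm⟩ := hq.dvd_choose_self two_ne_zero (hq.two_le.lt_of_ne' hp2)
    have hB : B = (q : ℤ) • -((q : ℤ) ^ k • ((m : ℤ) • B ^ 2 + (q : ℤ) ^ k • (B ^ 3 * c))) := by
      refine smul_right_injective _ (Int.natCast_ne_zero.mpr hq.ne_zero) ?_
      simp only [E, hm, Nat.cast_mul] at hqB
      linear_combination (norm := module) hqB
    rw [hB, smul_apply, smul_eq_mul]
    exact dvd_mul_right _ _
  · have hdvd : (p : ℤ) ∣ q * B i j := by
      have := congrFun₂ hqB i j
      simp only [smul_apply, smul_eq_mul] at this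
      exact this ▸ dvd_mul_right _ _
    refine ((Nat.prime_iff_prime_int.mp hp).dvd_or_dvd hdvd).resolve_left fun hpq => hqp ?_
    exact ((Nat.prime_dvd_prime_iff_eq hp hq).mp (Int.natCast_dvd_natCast.mp hpq)).symm

theorem exists_sub_one_eq_pow_succ_smul_of_pow_eq_one {p q : ℕ} (hp : p.Prime) (hp2 : p ≠ 2)
    (hq : q.Prime) {X : Matrix ι ι ℤ} (hXq : X ^ q = 1) (hX : ∀ i j, (p : ℤ) ∣ (X - 1) i j)
    (k : ℕ) : ∃ B : Matrix ι ι ℤ, X - 1 = (p : ℤ) ^ (k + 1) • B := by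
  induction k with
  | zero => simpa using exists_eq_smul_of_forall_dvd hX
  | succ k ih =>
    obtain ⟨B, hB⟩ := ih
    rw [sub_eq_iff_eq_add'] at hB
    obtain ⟨B', rfl⟩ := exists_eq_smul_of_forall_dvd
      (forall_dvd_of_one_add_pow_smul_pow_eq_one hp hp2 hq k B (hB ▸ hXq))
    exact ⟨B', by rw [hB, add_sub_cancel_left, smul_smul, ← pow_succ]⟩

theorem eq_one_of_pow_prime_eq_one {p q : ℕ} (hp : p.Prime) (hp2 : p ≠ 2) (hq : q.Prime)
    {X : Matrix ι ι ℤ} (hXq : X ^ q = 1) (hX : ∀ i j, (p : ℤ) ∣ (X - 1) i j) : X = 1 :=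
  sub_eq_zero.mp <| eq_zero_of_forall_exists_eq_pow_succ_smul
    (by simpa using hp.ne_one) (exists_sub_one_eq_pow_succ_smul_of_pow_eq_one hp hp2 hq hXq hX)

theorem intCastRingHom_mapMatrix_eq_one_iff {m : ℕ} {X : Matrix ι ι ℤ} :
    (Int.castRingHom (ZMod m)).mapMatrix X = 1 ↔ ∀ i j, (m : ℤ) ∣ (X - 1) i j := by
  rw [← sub_eq_zero, ← map_one (Int.castRingHom (ZMod m)).mapMatrix, ← map_sub]
  simp only [← ext_iff, RingHom.mapMatrix_apply, map_apply, zero_apply, eq_intCast,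
    ZMod.intCast_zmod_eq_zero_iff_dvd]

theorem eq_one_of_isOfFinOrder {p : ℕ} (hp : p.Prime) (hp2 : p ≠ 2) {X : Matrix ι ι ℤ}
    (hX : IsOfFinOrder X) (h : (Int.castRingHom (ZMod p)).mapMatrix X = 1) : X = 1 :=
  hX.eq_one_of_forall_pow_prime fun _ _ hq hXq => eq_one_of_pow_prime_eq_one hp hp2 hq hXq <|
    intCastRingHom_mapMatrix_eq_one_iff.mp (by rw [map_pow, h, one_pow])

theorem GeneralLinearGroup.eq_one_of_isOfFinOrder {p : ℕ} (hp : p.Prime) (hp2 : p ≠ 2)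
    {A : GL ι ℤ} (hA : IsOfFinOrder A)
    (h : GeneralLinearGroup.map (Int.castRingHom (ZMod p)) A = 1) : A = 1 :=
  Units.ext <| Matrix.eq_one_of_isOfFinOrder hp hp2 ((Units.coeHom _).isOfFinOrder hA)
    (congrArg Units.val h)

end Matrix

theorem stmt_11_general (n : ℕ) :
    (∀ A : GL (Fin n) ℤ, IsOfFinOrder A →
      (∀ i j, (3 : ℤ) ∣ ((A : Matrix (Fin n) (Fin n) ℤ) - 1) i j) → A = 1) ∧
    (∀ H : Subgroup (GL (Fin n) ℤ), Finite H →
      Set.InjOn (Matrix.GeneralLinearGroup.map (n := Fin n) (Int.castRingHom (ZMod 3)))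
        (H : Set (GL (Fin n) ℤ))) := by
  have hker (A : GL (Fin n) ℤ) (hA : IsOfFinOrder A)
      (h : Matrix.GeneralLinearGroup.map (Int.castRingHom (ZMod 3)) A = 1) : A = 1 :=
    Matrix.GeneralLinearGroup.eq_one_of_isOfFinOrder Nat.prime_three (by norm_num) hA h
  refine ⟨fun A hA h3 => hker A hA (Units.ext ?_),
    fun H _ => MonoidHom.injOn_of_isOfFinOrder_ker _ hker H⟩
  exact Matrix.intCastRingHom_mapMatrix_eq_one_iff.mpr (mod_cast h3)

theorem stmt_11 (n : ℕ) (hn : 1 ≤ n) :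
    (∀ A : GL (Fin n) ℤ, IsOfFinOrder A →
      (∀ i j, (3 : ℤ) ∣ ((A : Matrix (Fin n) (Fin n) ℤ) - 1) i j) → A = 1) ∧
    (∀ H : Subgroup (GL (Fin n) ℤ), Finite H →
      Set.InjOn (Matrix.GeneralLinearGroup.map (n := Fin n) (Int.castRingHom (ZMod 3)))
        (H : Set (GL (Fin n) ℤ))) :=
  stmt_11_general n
end
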